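/- Assume ūB(0) > ūA(0), ūA(1) > ūB(1), the set E = {y ∈ [0,1] : ūA(y) = ūB(y)} is finite, and at every q ∈ E the function ūA − ūB changes sign. Call a point x₀ ∈ 𝒳_s recurrent if there exists a Carathéodory solution x of the continuous-time imitation population dynamics with x(0) = x₀ such that x₀ ∈ ⋂_{t ≥ 0} closure(x([t, ∞))). Then the set of recurrent points equals the finite set {qρ : q ∈ {0,1} ∪ E}; consequently the Birkhoff center (the closure of the set of recurrent points) equals {qρ : q ∈ {0,1} ∪ E}, the set of equilibria of the dynamics. -/

import Mathlib

open scoped Classical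
open MeasureTheory Filter Set

/-- The state space `ℝ^p`, with the Euclidean norm. -/
abbrev Vec (p : ℕ) := EuclideanSpace ℝ (Fin p)

/-- Maximum of finitely many polynomial utilities at `y`. -/
noncomputable def ubar {p : ℕ} (u : Fin p → Polynomial ℝ) (y : ℝ) : ℝ :=
  ⨆ i, (u i).eval y

/-- The total proportion of `A`-players: `σ(x) = Σ_i x_i`. -/
noncomputable def sigma' {p : ℕ} (x : Vec p) : ℝ := ∑ i, x i

/-- The state space `𝒳_s = ∏_i [0, ρ_i]`. -/
def Xs {p : ℕ} (ρ : Vec p) : Set (Vec p) := {x | ∀ i, x i ∈ Set.Icc 0 (ρ i)}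

/-- The set-valued map of the continuous-time imitation population dynamics. -/
noncomputable def Vmap {p : ℕ} (ρ : Vec p) (uA uB : Fin p → Polynomial ℝ)
    (x : Vec p) : Set (Vec p) :=
  if x ∈ interior (Xs ρ) ∧ ubar uB (sigma' x) < ubar uA (sigma' x) then {ρ - x}
  else if x ∈ interior (Xs ρ) ∧ ubar uA (sigma' x) < ubar uB (sigma' x) then {-x}
  else segment ℝ (ρ - x) (-x)

/-- A Carathéodory solution of the continuous-time imitation population dynamics on `[0,∞)`:
a locally absolutely continuous `𝒳_s`-valued function whose derivative lies in `Vmap`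
almost everywhere, expressed in integral form. -/
def IsPopSol {p : ℕ} (ρ : Vec p) (uA uB : Fin p → Polynomial ℝ) (x : ℝ → Vec p) : Prop :=
  (∀ t, 0 ≤ t → x t ∈ Xs ρ) ∧
  ∃ v : ℝ → Vec p,
    (∀ᵐ t ∂(MeasureTheory.volume.restrict (Set.Ici (0:ℝ))), v t ∈ Vmap ρ uA uB (x t)) ∧
    (∀ t, 0 ≤ t → IntervalIntegrable v MeasureTheory.volume 0 t) ∧
    (∀ t, 0 ≤ t → x t = x 0 + ∫ s in (0:ℝ)..t, v s)

/-- The equilibrium set `E = {y ∈ [0,1] : ūA(y) = ūB(y)}`. -/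
noncomputable def Eset {p : ℕ} (uA uB : Fin p → Polynomial ℝ) : Set ℝ :=
  {y ∈ Set.Icc (0:ℝ) 1 | ubar uA y = ubar uB y}

/-- `ūA − ūB` changes sign at `q`. -/
def SignChange {p : ℕ} (uA uB : Fin p → Polynomial ℝ) (q : ℝ) : Prop :=
  ∃ ε > 0,
    ((∀ y ∈ Set.Ioo (q - ε) q ∩ Set.Icc (0:ℝ) 1, ubar uB y < ubar uA y) ∧
     (∀ y ∈ Set.Ioo q (q + ε) ∩ Set.Icc (0:ℝ) 1, ubar uA y < ubar uB y)) ∨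
    ((∀ y ∈ Set.Ioo (q - ε) q ∩ Set.Icc (0:ℝ) 1, ubar uA y < ubar uB y) ∧
     (∀ y ∈ Set.Ioo q (q + ε) ∩ Set.Icc (0:ℝ) 1, ubar uB y < ubar uA y))

/-- `x₀` is a recurrent point of the continuous-time imitation population dynamics:
some Carathéodory solution starting at `x₀` has `x₀` in its limit set. -/
def Recurrent {p : ℕ} (ρ : Vec p) (uA uB : Fin p → Polynomial ℝ) (x₀ : Vec p) : Prop :=
  ∃ x : ℝ → Vec p, IsPopSol ρ uA uB x ∧ x 0 = x₀ ∧
    x₀ ∈ ⋂ t ∈ Set.Ici (0:ℝ), closure (x '' Set.Ici t)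

/-!
Every admissible velocity in `𝒱(x)` is `a • ρ - x` for some `a ∈ [0, 1]`, so the deviation
`x - σ(x) • ρ` of a solution from the ray `ℝ • ρ` obeys `ẇ = -w` and decays like `e^{-t}`.
Hence a recurrent point lies on the ray: `x₀ = q • ρ` with `q = σ(x₀) ∈ [0, 1]`. If
`q ∈ (0, 1)` and `ūA(q) ≠ ūB(q)`, then near `q • ρ` the state is interior and the sign of
`ūA - ūB` is fixed, so once the deviation is small, `σ(x(t))` moves in one direction at a uniform
rate whenever it is close to `q`. Such a function crosses every level near `q` at most once and
cannot accumulate at `q`. Conversely every `q • ρ` with `q ∈ {0, 1} ∪ E` is an equilibrium. The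
Birkhoff center is then closed because `E` is finite.
-/

open Topology

section General

variable {E : Type*} [NormedAddCommGroup E] [NormedSpace ℝ E]

lemma MapClusterPt.eq_of_tendsto {X α : Type*} [TopologicalSpace X] [T2Space X] {F : Filter α}
    {u : α → X} {a b : X} (ha : MapClusterPt a F u) (hb : Tendsto u F (𝓝 b)) : a = b := by
  by_contra hab
  exact (ClusterPt.mono ha hb).neBot.ne (disjoint_nhds_nhds.2 hab).eq_bot

lemma ContinuousLinearMap.intervalIntegrable_comp {F : Type*} [NormedAddCommGroup F]
    [NormedSpace ℝ F] (L : E →L[ℝ] F) {v : ℝ → E} {μ : Measure ℝ} {a b : ℝ}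
    (hv : IntervalIntegrable v μ a b) : IntervalIntegrable (fun t => L (v t)) μ a b :=
  ⟨L.integrable_comp hv.1, L.integrable_comp hv.2⟩

lemma continuousOn_primitive_Ici {v : ℝ → E} {a : ℝ}
    (hv : ∀ t ≥ a, IntervalIntegrable v volume a t) :
    ContinuousOn (fun t => ∫ τ in a..t, v τ) (Ici a) := by
  intro t ht
  have hcont := intervalIntegral.continuousOn_primitive_interval'
    (hv (t + 1) (by linarith [ht.out])) left_mem_uIcc
  rw [uIcc_of_le (by linarith [ht.out])] at hcont
  refine (hcont t ⟨ht, by linarith⟩).mono_of_mem_nhdsWithin ?_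
  rw [← Ici_inter_Iic]
  exact inter_mem_nhdsWithin _ (Iic_mem_nhds (by linarith))

lemma eq_exp_neg_smul_of_eq_sub_integral [CompleteSpace E] {w : ℝ → E}
    (hcont : ContinuousOn w (Ici 0)) (hw : ∀ t ≥ 0, w t = w 0 - ∫ τ in (0:ℝ)..t, w τ) :
    ∀ t ≥ 0, w t = Real.exp (-t) • w 0 := by
  intro b hb
  have hint : ∀ t ≥ 0, IntervalIntegrable w volume 0 t := fun t ht =>
    (hcont.mono (by rw [uIcc_of_le ht]; exact Icc_subset_Ici_self)).intervalIntegrable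
  have hderiv : ∀ t ∈ Ico (0:ℝ) b,
      HasDerivWithinAt (fun τ => Real.exp τ • w τ) 0 (Ici t) t := by
    intro t ht
    have hprim : HasDerivWithinAt (fun τ => ∫ σ in (0:ℝ)..τ, w σ) (w t) (Ici t) t :=
      intervalIntegral.integral_hasDerivWithinAt_right (hint t ht.1)
        (((hcont.mono (Ici_subset_Ici.2 ht.1)).stronglyMeasurableAtFilter_nhdsWithin
          measurableSet_Ici t).filter_mono (nhdsWithin_mono t Ioi_subset_Ici_self))
        ((hcont t ht.1).mono fun y hy => ht.1.trans hy.out.le)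
    have hwt : HasDerivWithinAt w (-w t) (Ici t) t :=
      (hprim.const_sub (w 0)).congr (fun y hy => hw y (ht.1.trans hy)) (hw t ht.1)
    convert (Real.hasDerivAt_exp t).hasDerivWithinAt.smul hwt using 1
    · rfl
    · rw [smul_neg, neg_add_cancel]
  have hconst : Real.exp b • w b = Real.exp 0 • w 0 := constant_of_has_deriv_right_zero
    (Real.continuous_exp.continuousOn.smul (hcont.mono Icc_subset_Ici_self)) hderiv b ⟨hb, le_rfl⟩
  rw [Real.exp_zero, one_smul] at hconst
  rw [← hconst, Real.exp_neg, inv_smul_smul₀ (Real.exp_ne_zero b)]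

end General

section Barrier

lemma le_on_Ici_of_eventually_le_at_eq {s : ℝ → ℝ} {a θ : ℝ} (hs : ContinuousOn s (Ici a))
    (ha : θ ≤ s a) (hloc : ∀ t ≥ a, s t = θ → ∀ᶠ t' in 𝓝[>] t, θ ≤ s t') :
    ∀ t ≥ a, θ ≤ s t := by
  intro b hab
  have hclosed : IsClosed ({t | θ ≤ s t} ∩ Icc a b) := by
    rw [inter_comm]
    exact (hs.mono Icc_subset_Ici_self).preimage_isClosed_of_isClosed isClosed_Icc isClosed_Ici
  refine hclosed.Icc_subset_of_forall_mem_nhdsWithin ha (fun t ⟨ht, htab⟩ => ?_) ⟨hab, le_rfl⟩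
  rcases (show θ ≤ s t from ht).eq_or_lt with heq | hlt
  · exact hloc t htab.1 heq.symm
  · exact ((hs t htab.1).mono fun _ h => htab.1.trans (le_of_lt h)).eventually
      (lt_mem_nhds hlt) |>.mono fun _ h => le_of_lt h

def IncreasesNear (s : ℝ → ℝ) (T q δ c : ℝ) : Prop :=
  ∀ u w, T ≤ u → u ≤ w → (∀ τ ∈ Icc u w, |s τ - q| < δ) → s u + c * (w - u) ≤ s w

namespace IncreasesNear

variable {s : ℝ → ℝ} {T q δ c : ℝ}

lemma of_integral {g : ℝ → ℝ} (hT : 0 ≤ T) (hg : ∀ t ≥ 0, IntervalIntegrable g volume 0 t)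
    (hs : ∀ t ≥ 0, s t = s 0 + ∫ τ in (0:ℝ)..t, g τ)
    (hrate : ∀ᵐ τ, T ≤ τ → |s τ - q| < δ → c ≤ g τ) : IncreasesNear s T q δ c := by
  intro u w hu huw hband
  have h0u : 0 ≤ u := hT.trans hu
  have h0w : 0 ≤ w := h0u.trans huw
  have hsw : s w = s u + ∫ τ in u..w, g τ := by
    rw [hs w h0w, hs u h0u, ← intervalIntegral.integral_interval_sub_left (hg w h0w) (hg u h0u)]
    ring
  have hmono := intervalIntegral.integral_mono_ae_restrict huw intervalIntegrable_const
    ((hg u h0u).symm.trans (hg w h0w)) ((ae_restrict_iff' measurableSet_Icc).2 <|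
      hrate.mono fun τ h hτ => h (hu.trans hτ.1) (hband τ hτ))
  rw [intervalIntegral.integral_const, smul_eq_mul] at hmono
  linarith

lemma eventually_le_nhdsGT (h : IncreasesNear s T q δ c) (hc : 0 ≤ c)
    (hs : ContinuousOn s (Ici T)) {t : ℝ} (ht : T ≤ t) (hst : |s t - q| < δ) :
    ∀ᶠ t' in 𝓝[>] t, s t ≤ s t' := by
  have hnear : ∀ᶠ τ in 𝓝[≥] t, |s τ - q| < δ :=
    (hs t ht).mono (Ici_subset_Ici.2 ht) <| (show IsOpen {y : ℝ | |y - q| < δ} from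
      isOpen_lt (by fun_prop) continuous_const).mem_nhds hst
  obtain ⟨u, htu, hsub⟩ := mem_nhdsGE_iff_exists_Ico_subset.1 hnear
  filter_upwards [Ioo_mem_nhdsGT htu] with t' ht'
  have := h t t' ht ht'.1.le fun τ hτ => hsub ⟨hτ.1, hτ.2.trans_lt ht'.2⟩
  nlinarith [mul_nonneg hc (sub_nonneg.2 ht'.1.le)]

lemma eventually_add_half_le (h : IncreasesNear s T q δ c) (hc : 0 < c)
    (hs : ContinuousOn s (Ici T)) {a : ℝ} (ha : T ≤ a) (hsa : |s a - q| < δ / 2) :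
    ∀ᶠ t in atTop, q + δ / 2 ≤ s t := by
  -- every level within `δ` of `q` can only be crossed upwards
  have hstay : ∀ θ, |θ - q| < δ → ∀ a' ≥ T, θ ≤ s a' → ∀ t ≥ a', θ ≤ s t :=
    fun θ hθ a' ha' hθa => le_on_Ici_of_eventually_le_at_eq (hs.mono (Ici_subset_Ici.2 ha')) hθa
      fun t ht heq => (h.eventually_le_nhdsGT hc.le hs (ha'.trans ht) (heq ▸ hθ)).mono
        fun _ h' => heq ▸ h'
  have hδ : 0 < δ := by linarith [abs_nonneg (s a - q)]
  obtain ⟨b, hab, hb⟩ : ∃ b ≥ a, q + δ / 2 ≤ s b := by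
    by_contra! hlt
    have hband : ∀ τ ∈ Icc a (a + δ / c), |s τ - q| < δ := fun τ hτ => by
      have := hstay (s a) (by linarith) a ha le_rfl τ hτ.1
      rw [abs_lt] at hsa ⊢
      constructor <;> linarith [hlt τ hτ.1]
    have hac : a ≤ a + δ / c := le_add_of_nonneg_right (div_pos hδ hc).le
    have := h a (a + δ / c) ha hac hband
    rw [add_sub_cancel_left, mul_div_cancel₀ _ hc.ne'] at this
    linarith [hlt _ hac, (abs_lt.1 hsa).1]
  refine eventually_atTop.2 ⟨b, hstay _ ?_ b (ha.trans hab) hb⟩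
  rw [add_sub_cancel_left, abs_of_pos (half_pos hδ)]
  exact half_lt_self hδ

lemma not_mapClusterPt (h : IncreasesNear s T q δ c) (hδ : 0 < δ) (hc : 0 < c)
    (hs : ContinuousOn s (Ici T)) : ¬ MapClusterPt q atTop s := by
  intro hq
  have hnear : ∀ᶠ y in 𝓝 q, |y - q| < δ / 2 :=
    (show IsOpen {y : ℝ | |y - q| < δ / 2} from isOpen_lt (by fun_prop) continuous_const).mem_nhds
      (by simpa using half_pos hδ)
  obtain ⟨a, hsa, ha⟩ := ((hq.frequently hnear).and_eventually (eventually_ge_atTop T)).exists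
  obtain ⟨t, hst, ht⟩ :=
    ((hq.frequently hnear).and_eventually (h.eventually_add_half_le hc hs ha hsa)).exists
  linarith [(abs_lt.1 hst).2]

end IncreasesNear

end Barrier

section StateSpace

variable {p : ℕ}

noncomputable def sigmaL (p : ℕ) : Vec p →L[ℝ] ℝ := ∑ i, EuclideanSpace.proj i

@[simp] lemma coe_sigmaL : ⇑(sigmaL p) = sigma' := by
  ext x
  simp [sigmaL, sigma']

lemma sigmaL_apply (x : Vec p) : sigmaL p x = sigma' x := by
  rw [coe_sigmaL]

lemma continuous_sigma' : Continuous (sigma' : Vec p → ℝ) :=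
  coe_sigmaL (p := p) ▸ (sigmaL p).continuous

lemma sigma'_smul (q : ℝ) {ρ : Vec p} (hρ : sigma' ρ = 1) : sigma' (q • ρ) = q := by
  rw [← sigmaL_apply, map_smul, sigmaL_apply, hρ, smul_eq_mul, mul_one]

lemma sigma'_mem_Icc {ρ x : Vec p} (hρ : sigma' ρ = 1) (hx : x ∈ Xs ρ) : sigma' x ∈ Icc 0 1 :=
  ⟨Finset.sum_nonneg fun i _ => (hx i).1, hρ ▸ Finset.sum_le_sum fun i _ => (hx i).2⟩

lemma interior_Xs (ρ : Vec p) : interior (Xs ρ) = {x | ∀ i, x i ∈ Ioo 0 (ρ i)} := by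
  have hXs : Xs ρ = ⋂ i, (fun x : Vec p => x i) ⁻¹' Icc 0 (ρ i) := by
    ext x; simp [Xs]
  rw [hXs, interior_iInter_of_finite]
  ext x
  simp only [mem_iInter, mem_ofPred_eq]
  refine forall_congr' fun i => ?_
  rw [← (PiLp.isOpenMap_apply 2 _ i).preimage_interior_eq_interior_preimage (by fun_prop),
    interior_Icc, mem_preimage]

lemma smul_mem_Xs {ρ : Vec p} (hρ : ∀ i, 0 ≤ ρ i) {q : ℝ} (hq : q ∈ Icc 0 1) : q • ρ ∈ Xs ρ :=
  fun i => ⟨mul_nonneg hq.1 (hρ i), mul_le_of_le_one_left (hρ i) hq.2⟩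

lemma smul_mem_interior_Xs {ρ : Vec p} (hρ : ∀ i, 0 < ρ i) {q : ℝ} (hq : q ∈ Ioo 0 1) :
    q • ρ ∈ interior (Xs ρ) := by
  rw [interior_Xs]
  exact fun i => ⟨mul_pos hq.1 (hρ i), mul_lt_of_lt_one_left (hρ i) hq.2⟩

lemma smul_notMem_interior_Xs [Nonempty (Fin p)] (ρ : Vec p) {q : ℝ} (hq : q = 0 ∨ q = 1) :
    q • ρ ∉ interior (Xs ρ) := by
  rw [interior_Xs]
  intro h
  obtain ⟨i⟩ := ‹Nonempty (Fin p)›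
  have := h i
  rcases hq with rfl | rfl <;> simp at this

lemma continuous_ubar [Nonempty (Fin p)] (u : Fin p → Polynomial ℝ) : Continuous (ubar u) := by
  have h : ubar u = fun y => Finset.univ.sup' Finset.univ_nonempty fun i => (u i).eval y := by
    funext y
    rw [Finset.sup'_univ_eq_ciSup]
    rfl
  rw [h]
  exact Continuous.finset_sup'_apply _ fun i _ => (u i).continuous_aeval

end StateSpace

section Vmap

variable {p : ℕ} {ρ : Vec p} {uA uB : Fin p → Polynomial ℝ} {x : Vec p}

lemma Vmap_subset_segment : Vmap ρ uA uB x ⊆ segment ℝ (ρ - x) (-x) := by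
  unfold Vmap
  split_ifs
  · exact singleton_subset_iff.2 (left_mem_segment ℝ _ _)
  · exact singleton_subset_iff.2 (right_mem_segment ℝ _ _)
  · exact subset_rfl

lemma Vmap_of_lt (hx : x ∈ interior (Xs ρ)) (h : ubar uB (sigma' x) < ubar uA (sigma' x)) :
    Vmap ρ uA uB x = {ρ - x} := by
  simp [Vmap, hx, h]

lemma Vmap_of_gt (hx : x ∈ interior (Xs ρ)) (h : ubar uA (sigma' x) < ubar uB (sigma' x)) :
    Vmap ρ uA uB x = {-x} := by
  simp [Vmap, hx, h, h.not_gt]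

lemma Vmap_eq_segment (h : x ∉ interior (Xs ρ) ∨ ubar uA (sigma' x) = ubar uB (sigma' x)) :
    Vmap ρ uA uB x = segment ℝ (ρ - x) (-x) := by
  rcases h with h | h <;> simp [Vmap, h]

lemma zero_mem_segment_smul (ρ : Vec p) {q : ℝ} (hq : q ∈ Icc 0 1) :
    (0 : Vec p) ∈ segment ℝ (ρ - q • ρ) (-(q • ρ)) :=
  ⟨q, 1 - q, hq.1, sub_nonneg.2 hq.2, by ring, by module⟩

noncomputable def rayDeviation (ρ : Vec p) : Vec p →L[ℝ] Vec p :=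
  ContinuousLinearMap.id ℝ (Vec p) - (sigmaL p).smulRight ρ

@[simp] lemma rayDeviation_apply (ρ x : Vec p) : rayDeviation ρ x = x - sigma' x • ρ := by
  simp [rayDeviation]

lemma rayDeviation_of_mem_segment {v : Vec p} (hρ : sigma' ρ = 1)
    (hv : v ∈ segment ℝ (ρ - x) (-x)) : rayDeviation ρ v = -rayDeviation ρ x := by
  obtain ⟨a, b, -, -, hab, rfl⟩ := hv
  obtain rfl : b = 1 - a := by linarith
  simp only [rayDeviation_apply, ← sigmaL_apply, map_add, map_smul, map_sub, map_neg]
  rw [sigmaL_apply ρ, hρ]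
  module

lemma eventually_mem_of_tendsto_rayDeviation {α : Type*} {l : Filter α} {x : α → Vec p}
    (hx : Tendsto (fun t => rayDeviation ρ (x t)) l (𝓝 0)) {q : ℝ} {N : Set (Vec p)}
    (hN : N ∈ 𝓝 (q • ρ)) : ∃ δ > 0, ∀ᶠ t in l, |sigma' (x t) - q| < δ → x t ∈ N := by
  have hcont : Tendsto (fun z : Vec p × ℝ => z.1 + z.2 • ρ) (𝓝 (0, q)) (𝓝 (q • ρ)) := by
    convert (Continuous.tendsto (f := fun z : Vec p × ℝ => z.1 + z.2 • ρ) (by fun_prop) (0, q))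
      using 2
    simp
  obtain ⟨U, hU, V, hV, hUV⟩ := mem_nhds_prod_iff.1 (hcont hN)
  obtain ⟨δ, hδ, hδV⟩ := Metric.mem_nhds_iff.1 hV
  refine ⟨δ, hδ, ?_⟩
  filter_upwards [hx hU] with t hwt hst
  have := hUV (mk_mem_prod hwt (hδV (by rwa [Metric.mem_ball, Real.dist_eq])))
  simpa only [mem_preimage, rayDeviation_apply, sub_add_cancel] using this

lemma exists_sigma'_drift_near_smul [Nonempty (Fin p)] (hρ : ∀ i, 0 < ρ i)
    (hsum : sigma' ρ = 1) {q : ℝ} (hq : q ∈ Ioo 0 1) (hne : ubar uA q ≠ ubar uB q) :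
    ∃ ε c : ℝ, |ε| = 1 ∧ 0 < c ∧
      ∀ᶠ y in 𝓝 (q • ρ), ∀ v ∈ Vmap ρ uA uB y, c ≤ ε * sigma' v := by
  have hint : ∀ᶠ y in 𝓝 (q • ρ), y ∈ interior (Xs ρ) :=
    isOpen_interior.mem_nhds (smul_mem_interior_Xs hρ hq)
  have hσ : Tendsto sigma' (𝓝 (q • ρ)) (𝓝 q) := by
    simpa only [sigma'_smul q hsum] using continuous_sigma'.tendsto (q • ρ)
  have hA := (continuous_ubar uA).tendsto q
  have hB := (continuous_ubar uB).tendsto q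
  rcases hne.lt_or_gt with hlt | hgt
  · refine ⟨-1, q / 2, by simp, by linarith [hq.1], ?_⟩
    filter_upwards [hint, hσ.eventually (hA.eventually_lt hB hlt),
      hσ.eventually (lt_mem_nhds (half_lt_self hq.1))] with y hy hAB hy2 v hv
    rw [Vmap_of_gt hy hAB, mem_singleton_iff] at hv
    rw [hv, ← sigmaL_apply, map_neg, sigmaL_apply]
    linarith
  · refine ⟨1, (1 - q) / 2, by simp, by linarith [hq.2], ?_⟩
    filter_upwards [hint, hσ.eventually (hB.eventually_lt hA hgt),
      hσ.eventually (gt_mem_nhds (show q < (1 + q) / 2 by linarith [hq.2]))] with y hy hAB hy2 v hv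
    rw [Vmap_of_lt hy hAB, mem_singleton_iff] at hv
    rw [hv, one_mul, ← sigmaL_apply, map_sub, sigmaL_apply, sigmaL_apply, hsum]
    linarith

end Vmap

namespace IsPopSol

variable {p : ℕ} {ρ : Vec p} {uA uB : Fin p → Polynomial ℝ} {x : ℝ → Vec p}

lemma continuousOn (hx : IsPopSol ρ uA uB x) : ContinuousOn x (Ici 0) := by
  obtain ⟨-, v, -, hint, hxv⟩ := hx
  exact (continuousOn_const.add (continuousOn_primitive_Ici hint)).congr hxv

lemma tendsto_rayDeviation (hρ : sigma' ρ = 1) (hx : IsPopSol ρ uA uB x) :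
    Tendsto (fun t => rayDeviation ρ (x t)) atTop (𝓝 0) := by
  have hcont := (rayDeviation ρ).continuous.comp_continuousOn hx.continuousOn
  obtain ⟨-, v, hv, hint, hxv⟩ := hx
  have hvx : ∀ᵐ τ, τ ∈ Ici (0:ℝ) → rayDeviation ρ (v τ) = -rayDeviation ρ (x τ) :=
    (ae_restrict_iff' measurableSet_Ici).1 <|
      hv.mono fun τ hτ => rayDeviation_of_mem_segment hρ (Vmap_subset_segment hτ)
  have hw : ∀ t ≥ 0, rayDeviation ρ (x t)
      = rayDeviation ρ (x 0) - ∫ τ in (0:ℝ)..t, rayDeviation ρ (x τ) := by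
    intro t ht
    have hcongr : ∫ τ in (0:ℝ)..t, rayDeviation ρ (v τ)
        = ∫ τ in (0:ℝ)..t, -rayDeviation ρ (x τ) :=
      intervalIntegral.integral_congr_ae <| hvx.mono fun τ hτ hτt =>
        hτ (by rw [uIoc_of_le ht] at hτt; exact hτt.1.le)
    rw [hxv t ht, map_add, ← (rayDeviation ρ).intervalIntegral_comp_comm (hint t ht), hcongr,
      intervalIntegral.integral_neg, sub_eq_add_neg]
  have hexp := eq_exp_neg_smul_of_eq_sub_integral hcont hw
  have hlim : Tendsto (fun t : ℝ => Real.exp (-t) • rayDeviation ρ (x 0)) atTop (𝓝 0) := by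
    simpa using Real.tendsto_exp_neg_atTop_nhds_zero.smul_const (rayDeviation ρ (x 0))
  exact hlim.congr' (eventually_ge_atTop 0 |>.mono fun t ht => (hexp t ht).symm)

lemma not_mapClusterPt_sigma' [Nonempty (Fin p)] (hρ : ∀ i, 0 < ρ i) (hsum : sigma' ρ = 1)
    (hx : IsPopSol ρ uA uB x) {q : ℝ} (hq : q ∈ Ioo 0 1) (hne : ubar uA q ≠ ubar uB q) :
    ¬ MapClusterPt q atTop (fun t => sigma' (x t)) := by
  obtain ⟨ε, c, hε, hc, hN⟩ := exists_sigma'_drift_near_smul hρ hsum hq hne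
  obtain ⟨δ, hδ, hnear⟩ :=
    eventually_mem_of_tendsto_rayDeviation (hx.tendsto_rayDeviation hsum) hN
  obtain ⟨T, hT⟩ := eventually_atTop.1 (hnear.and (eventually_ge_atTop 0))
  have hT0 : 0 ≤ T := (hT T le_rfl).2
  have hcont : ContinuousOn (fun t => ε * sigma' (x t)) (Ici T) :=
    ((continuous_const_mul ε).comp continuous_sigma').comp_continuousOn
      (hx.continuousOn.mono (Ici_subset_Ici.2 hT0))
  obtain ⟨-, v, hv, hint, hxv⟩ := hx
  have hdist : ∀ t, |ε * sigma' (x t) - ε * q| = |sigma' (x t) - q| := fun t => by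
    rw [← mul_sub, abs_mul, hε, one_mul]
  have hinc : IncreasesNear (fun t => ε * sigma' (x t)) T (ε * q) δ c := by
    refine IncreasesNear.of_integral (g := fun t => ε * sigma' (v t)) hT0
      (fun t ht => ?_) (fun t ht => ?_) ?_
    · simpa using ((sigmaL p).intervalIntegrable_comp (hint t ht)).const_mul ε
    · simp only [hxv t ht, map_add, ← sigmaL_apply, intervalIntegral.integral_const_mul,
        (sigmaL p).intervalIntegral_comp_comm (hint t ht)]
      ring
    · filter_upwards [(ae_restrict_iff' measurableSet_Ici).1 hv] with t ht hTt hst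
      exact (hT t hTt).1 (hdist t ▸ hst) (v t) (ht (hT0.trans hTt))
  exact fun hcl => hinc.not_mapClusterPt hδ hc hcont
    (hcl.continuousAt_comp (continuous_const_mul ε).continuousAt)

end IsPopSol

section Recurrent

variable {p : ℕ} {ρ : Vec p} {uA uB : Fin p → Polynomial ℝ} {x₀ : Vec p}

lemma recurrent_of_zero_mem_Vmap (hx₀ : x₀ ∈ Xs ρ) (h0 : 0 ∈ Vmap ρ uA uB x₀) :
    Recurrent ρ uA uB x₀ :=
  ⟨fun _ => x₀, ⟨fun _ _ => hx₀, fun _ => 0, ae_of_all _ fun _ => h0,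
    fun _ _ => intervalIntegrable_const, fun _ _ => by simp⟩, rfl,
    mem_iInter₂.2 fun t _ => subset_closure ⟨t, self_mem_Ici, rfl⟩⟩

lemma recurrent_smul [Nonempty (Fin p)] (hρ : ∀ i, 0 < ρ i) (hsum : sigma' ρ = 1) {q : ℝ}
    (hq : q ∈ ({0, 1} ∪ Eset uA uB)) : Recurrent ρ uA uB (q • ρ) := by
  have hq01 : q ∈ Icc 0 1 := by
    rcases hq with (rfl | rfl) | hq
    exacts [⟨le_rfl, zero_le_one⟩, ⟨zero_le_one, le_rfl⟩, hq.1]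
  refine recurrent_of_zero_mem_Vmap (smul_mem_Xs (fun i => (hρ i).le) hq01) ?_
  rw [Vmap_eq_segment]
  · exact zero_mem_segment_smul ρ hq01
  · rcases hq with hq | hq
    · exact Or.inl (smul_notMem_interior_Xs ρ hq)
    · exact Or.inr (by rw [sigma'_smul q hsum]; exact hq.2)

lemma Recurrent.exists_mapClusterPt (h : Recurrent ρ uA uB x₀) :
    ∃ x, IsPopSol ρ uA uB x ∧ x 0 = x₀ ∧ MapClusterPt x₀ atTop x := by
  obtain ⟨x, hx, hx0, hmem⟩ := h
  refine ⟨x, hx, hx0, mapClusterPt_atTop_iff_forall_mem_closure.2 fun t => ?_⟩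
  exact closure_mono (image_mono (Ici_subset_Ici.2 (le_max_left t 0)))
    (mem_iInter₂.1 hmem (max t 0) (le_max_right t 0))

lemma Recurrent.exists_smul_eq [Nonempty (Fin p)] (hρ : ∀ i, 0 < ρ i) (hsum : sigma' ρ = 1)
    (h : Recurrent ρ uA uB x₀) : ∃ q ∈ ({0, 1} ∪ Eset uA uB), q • ρ = x₀ := by
  obtain ⟨x, hx, hx0, hcl⟩ := h.exists_mapClusterPt
  have hray : rayDeviation ρ x₀ = 0 :=
    (hcl.continuousAt_comp (rayDeviation ρ).continuous.continuousAt).eq_of_tendsto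
      (hx.tendsto_rayDeviation hsum)
  have hq := sigma'_mem_Icc hsum (hx0 ▸ hx.1 0 le_rfl)
  refine ⟨sigma' x₀, ?_, (sub_eq_zero.1 (rayDeviation_apply ρ x₀ ▸ hray)).symm⟩
  by_contra hnot
  simp only [mem_union, mem_insert_iff, mem_singleton_iff, Eset, mem_ofPred_eq, not_or] at hnot
  exact hx.not_mapClusterPt_sigma' hρ hsum
    ⟨hq.1.lt_of_ne (Ne.symm hnot.1.1), hq.2.lt_of_ne hnot.1.2⟩ (fun h => hnot.2 ⟨hq, h⟩)
    (hcl.continuousAt_comp continuous_sigma'.continuousAt)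

end Recurrent

theorem birkhoff_center_is_equilibria_general
    {p : ℕ} (hp : 0 < p) (ρ : Vec p) (hρ : ∀ i, 0 < ρ i) (hsum : ∑ i, ρ i = 1)
    (uA uB : Fin p → Polynomial ℝ)
    (hE : (Eset uA uB).Finite) :
    {x₀ : Vec p | Recurrent ρ uA uB x₀}
        = (fun q : ℝ => q • ρ) '' ({0, 1} ∪ Eset uA uB) ∧
    closure {x₀ : Vec p | Recurrent ρ uA uB x₀}
        = (fun q : ℝ => q • ρ) '' ({0, 1} ∪ Eset uA uB) := by
  have : Nonempty (Fin p) := ⟨⟨0, hp⟩⟩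
  have hrec : {x₀ : Vec p | Recurrent ρ uA uB x₀}
      = (fun q : ℝ => q • ρ) '' ({0, 1} ∪ Eset uA uB) :=
    Set.ext fun x₀ => ⟨fun h => h.exists_smul_eq hρ hsum,
      fun ⟨_, hq, hx₀⟩ => hx₀ ▸ recurrent_smul hρ hsum hq⟩
  refine ⟨hrec, ?_⟩
  rw [hrec]
  exact ((((finite_singleton 1).insert 0).union hE).image _).isClosed.closure_eq

theorem birkhoff_center_is_equilibria
    {p : ℕ} (hp : 0 < p) (ρ : Vec p) (hρ : ∀ i, 0 < ρ i) (hsum : ∑ i, ρ i = 1)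
    (uA uB : Fin p → Polynomial ℝ)
    (h0 : ubar uA 0 < ubar uB 0) (h1 : ubar uB 1 < ubar uA 1)
    (hE : (Eset uA uB).Finite)
    (hsc : ∀ q ∈ Eset uA uB, SignChange uA uB q) :
    {x₀ : Vec p | Recurrent ρ uA uB x₀}
        = (fun q : ℝ => q • ρ) '' ({0, 1} ∪ Eset uA uB) ∧
    closure {x₀ : Vec p | Recurrent ρ uA uB x₀}
        = (fun q : ℝ => q • ρ) '' ({0, 1} ∪ Eset uA uB) :=
  birkhoff_center_is_equilibria_general hp ρ hρ hsum uA uB hE
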